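/- Let f : ℕ → ℕ satisfy f i ≤ 2^i for all i, and define the sequence HP : ℕ → ℚ by HP k = (∑_{i < k} f i) / (∑_{i < k} 2^i) (with HP 0 = 0). If HP is a computable function from ℕ to ℚ, then f is computable. Equivalently (contrapositive, as claimed in the paper): if f is not computable, then the sequence of halting-probability approximations HP is not computable. -/

import Mathlib

/-!
Mathlib's `Primcodable ℚ` comes from `Denumerable.ofEncodableOfInfinite`: a rational is coded by
the number of structural codes `Nat.pair (encode q.num) q.den` below its own. The set of
structural codes is primitive recursive, so the structural code is the `Nat.nth` element of that
set, found by unbounded search; hence numerator and denominator are computable from `HP k`.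
Since `∑ i < k, 2 ^ i = 2 ^ k - 1`, the partial sum `∑ i < k, f i` is
`|num (HP k)| * (2 ^ k - 1) / den (HP k)`, and `f k` is a difference of consecutive partial sums.
-/

open Encodable

theorem Nat.gcd_eq_findGreatest (a b : ℕ) :
    Nat.gcd a b = Nat.findGreatest (fun d => d ∣ a ∧ d ∣ b) (a + b) := by
  refine (Nat.findGreatest_eq_iff.2 ⟨?_, fun _ => ⟨a.gcd_dvd_left b, a.gcd_dvd_right b⟩, ?_⟩).symm
  · rcases a.eq_zero_or_pos with rfl | ha
    · simp
    · exact (Nat.gcd_le_left b ha).trans (Nat.le_add_right a b)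
  · rintro k hlt hle ⟨hka, hkb⟩
    rcases (Nat.gcd a b).eq_zero_or_pos with h0 | hpos
    · rw [Nat.gcd_eq_zero_iff] at h0
      omega
    · exact hlt.not_ge (Nat.le_of_dvd hpos (Nat.dvd_gcd hka hkb))

namespace Primrec

theorem nat_pow : Primrec₂ ((· ^ ·) : ℕ → ℕ → ℕ) :=
  Primrec₂.unpaired'.1 Nat.Primrec.pow

theorem nat_gcd : Primrec₂ Nat.gcd := by
  have hdvd : PrimrecRel fun (p : ℕ × ℕ) (d : ℕ) => d ∣ p.1 ∧ d ∣ p.2 :=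
    (PrimrecPred.and
      (Primrec.eq.comp (nat_mod.comp (fst.comp fst) snd) (const 0))
      (Primrec.eq.comp (nat_mod.comp (snd.comp fst) snd) (const 0))).of_eq
      fun _ => by simp only [Nat.dvd_iff_mod_eq_zero]
  exact (nat_findGreatest (nat_add.comp fst snd) hdvd).to₂.of_eq
    fun a b => (Nat.gcd_eq_findGreatest a b).symm

theorem int_natAbs : Primrec Int.natAbs := by
  refine (nat_div.comp (succ.comp Primrec.encode) (const 2)).of_eq fun z => ?_
  rcases z with n | n
  · show (2 * n + 1) / 2 = n
    omega
  · show (2 * n + 1 + 1) / 2 = n + 1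
    omega

theorem nat_count {p : ℕ → Prop} [DecidablePred p] (hp : PrimrecPred p) :
    Primrec (Nat.count p) :=
  (list_length.comp ((listFilter hp).comp list_range)).of_eq fun n => by
    simp [Nat.count, List.countP_eq_length_filter]

end Primrec

theorem Computable.nat_nth {p : ℕ → Prop} (hp : PrimrecPred p) (hinf : (Set.ofPred p).Infinite) :
    Computable (Nat.nth p) := by
  classical
  have hsearch : PrimrecRel fun n k => p k ∧ Nat.count p k = n :=
    PrimrecPred.and (hp.comp Primrec.snd)
      (Primrec.eq.comp ((Primrec.nat_count hp).comp Primrec.snd) Primrec.fst)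
  refine (Partrec.rfind hsearch.decide.to_comp.partrec₂).of_eq_tot fun n => Nat.mem_rfind.2 ⟨?_, ?_⟩
  · simpa using ⟨Nat.nth_mem_of_infinite hinf n, Nat.count_nth_of_infinite hinf n⟩
  · intro m hm
    have : p m → Nat.count p m ≠ n := fun hpm =>
      (Nat.count_strict_mono hpm hm).ne.trans_eq (Nat.count_nth_of_infinite hinf n)
    simpa using this

section OfEncodableOfInfinite

attribute [local instance] Encodable.decidableRangeEncode

variable {α : Type*} [Encodable α] [Infinite α]

theorem Denumerable.encode_ofEncodableOfInfinite (a : α) :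
    @encode α (Denumerable.ofEncodableOfInfinite α).toEncodable a =
      Nat.count (· ∈ Set.range (encode : α → ℕ)) (encode a) :=
  rfl

theorem Computable.encode_of_ofEncodableOfInfinite
    (h : PrimrecPred (· ∈ Set.range (encode : α → ℕ))) :
    @Computable α ℕ (@Primcodable.ofDenumerable α (Denumerable.ofEncodableOfInfinite α)) _
      encode := by
  let _ : Primcodable α := @Primcodable.ofDenumerable α (Denumerable.ofEncodableOfInfinite α)
  refine ((Computable.nat_nth h (Set.infinite_range_of_injective encode_injective)).comp
    Computable.encode).of_eq fun a => ?_
  rw [Denumerable.encode_ofEncodableOfInfinite]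
  exact Nat.nth_count (Set.mem_range_self a)

end OfEncodableOfInfinite

theorem Rat.encode_eq_pair (q : ℚ) : encode q = Nat.pair (encode q.num) q.den :=
  rfl

theorem Rat.mem_range_encode_iff (k : ℕ) :
    k ∈ Set.range (encode : ℚ → ℕ) ↔
      0 < k.unpair.2 ∧ (Denumerable.ofNat ℤ k.unpair.1).natAbs.Coprime k.unpair.2 := by
  constructor
  · rintro ⟨q, rfl⟩
    rw [Rat.encode_eq_pair, Nat.unpair_pair, Denumerable.ofNat_encode]
    exact ⟨q.den_pos, q.reduced⟩
  · rintro ⟨hden, hcop⟩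
    refine ⟨⟨Denumerable.ofNat ℤ k.unpair.1, k.unpair.2, hden.ne', hcop⟩, ?_⟩
    rw [Rat.encode_eq_pair, Denumerable.encode_ofNat, Nat.pair_unpair]

theorem Rat.primrecPred_mem_range_encode : PrimrecPred (· ∈ Set.range (encode : ℚ → ℕ)) := by
  have hfst : Primrec fun k : ℕ => k.unpair.1 := Primrec.fst.comp Primrec.unpair
  have hsnd : Primrec fun k : ℕ => k.unpair.2 := Primrec.snd.comp Primrec.unpair
  refine (PrimrecPred.and (Primrec.nat_lt.comp (Primrec.const 0) hsnd)
    (Primrec.eq.comp (Primrec.nat_gcd.comp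
      (Primrec.int_natAbs.comp ((Primrec.ofNat ℤ).comp hfst)) hsnd) (Primrec.const 1))).of_eq
    fun k => (Rat.mem_range_encode_iff k).symm

theorem Computable.rat_num_den : Computable fun q : ℚ => (q.num, q.den) :=
  Computable.encode_iff.1
    (Computable.encode_of_ofEncodableOfInfinite Rat.primrecPred_mem_range_encode)

theorem Rat.natAbs_num_mul_div_den_of_eq_div {q : ℚ} {n d : ℕ} (hd : d ≠ 0)
    (hq : q = n / d) : q.num.natAbs * d / q.den = n := by
  have hcross : q.num * d = n * q.den := by
    have : (q.num : ℚ) * d = n * q.den := by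
      rw [← Rat.mul_den_eq_num, hq]
      field_simp
    exact_mod_cast this
  have : q.num.natAbs * d = n * q.den := by
    simpa [Int.natAbs_mul] using congrArg Int.natAbs hcross
  rw [this, Nat.mul_div_cancel _ q.den_pos]

theorem Computable.of_sum_range {f : ℕ → ℕ}
    (h : Computable fun k => ∑ i ∈ Finset.range k, f i) : Computable f :=
  (Primrec.nat_sub.to_comp.comp (h.comp Computable.succ) h).of_eq fun k => by
    simp [Finset.sum_range_succ]

theorem computable_of_computable_haltingProbApprox_general (f : ℕ → ℕ) (HP : ℕ → ℚ)
    (hHP : ∀ k, HP k =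
      (∑ i ∈ Finset.range k, (f i : ℚ)) / (∑ i ∈ Finset.range k, (2 : ℚ) ^ i))
    (h : Computable HP) :
    Computable f := by
  have hsum : ∀ k, (HP k).num.natAbs * (2 ^ k - 1) / (HP k).den = ∑ i ∈ Finset.range k, f i := by
    intro k
    rcases k.eq_zero_or_pos with rfl | hk
    · simp
    refine Rat.natAbs_num_mul_div_den_of_eq_div ?_ ?_
    · have := Nat.one_lt_two_pow hk.ne'
      omega
    · rw [hHP, ← Nat.div_one (2 ^ k - 1), ← Nat.geomSum_eq le_rfl]
      push_cast
      ring
  have hdecode : Primrec₂ fun (k : ℕ) (p : ℤ × ℕ) => p.1.natAbs * (2 ^ k - 1) / p.2 :=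
    Primrec.nat_div.comp₂
      (Primrec.nat_mul.comp₂ (Primrec.int_natAbs.comp (Primrec.fst.comp Primrec.snd)).to₂
        (Primrec.nat_sub.comp₂ (Primrec.nat_pow.comp (Primrec.const 2) Primrec.fst).to₂
          (Primrec₂.const 1)))
      (Primrec.snd.comp Primrec.snd).to₂
  exact Computable.of_sum_range
    ((hdecode.to_comp.comp Computable.id (Computable.rat_num_den.comp h)).of_eq hsum)

theorem computable_of_computable_haltingProbApprox (f : ℕ → ℕ)
    (hf : ∀ i, f i ≤ 2 ^ i) (HP : ℕ → ℚ)
    (hHP : ∀ k, HP k =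
      (∑ i ∈ Finset.range k, (f i : ℚ)) / (∑ i ∈ Finset.range k, (2 : ℚ) ^ i))
    (h : Computable HP) :
    Computable f :=
  computable_of_computable_haltingProbApprox_general f HP hHP h
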